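/- Let G = (X, Y, u) be a continuous zero-sum game and ε > 0. The double oracle algorithm terminates after finitely many iterations with duality gap U(x_{i+1}, q_i*) − U(p_i*, y_{i+1}) ≤ ε, and the output (p_i*, q_i*) is a finitely supported ε-equilibrium of G. -/

import Mathlib

open MeasureTheory

/-! By compactness, some two pairs of best responses `(x_i, y_i)`, `(x_j, y_j)` with `i < j` lie
within the modulus of uniform continuity of `u` for `ε / 2`. Since `x_i ∈ X_j` and `y_i ∈ Y_j`, the
subgame equilibrium at step `j` satisfies `U(x_i, q_j) ≤ U(p_j, q_j) ≤ U(p_j, y_i)`, and replacing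
`x_i, y_i` by `x_j, y_j` costs at most `ε / 2` on each side: the duality gap at step `j` is at most
`ε`. By Fubini no mixed strategy beats a best pure response, so a gap at most `ε` makes the
subgame equilibrium an `ε`-equilibrium of the whole game. -/

theorem exists_lt_and_dist_lt_of_compactSpace {α : Type*} [PseudoMetricSpace α] [CompactSpace α]
    (x : ℕ → α) {δ : ℝ} (hδ : 0 < δ) : ∃ i j, i < j ∧ dist (x i) (x j) < δ := by
  obtain ⟨_, -, φ, hφ, hlim⟩ := isCompact_univ.tendsto_subseq (x := x) fun _ ↦ Set.mem_univ _
  obtain ⟨N, hN⟩ := Metric.cauchySeq_iff'.mp hlim.cauchySeq δ hδ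
  exact ⟨φ N, φ (N + 1), hφ N.lt_succ_self, by simpa [dist_comm] using hN (N + 1) N.le_succ⟩

theorem mem_of_lt_of_forall_succ_eq_insert {α : Type*} {S : ℕ → Set α} {x : ℕ → α}
    (hS : ∀ i, S (i + 1) = insert (x i) (S i)) {i j : ℕ} (hij : i < j) : x i ∈ S j :=
  (monotone_nat_of_le_succ (fun k ↦ (hS k).symm ▸ Set.subset_insert _ _) hij : S (i + 1) ⊆ S j)
    ((hS i).symm ▸ Set.mem_insert _ _)

section Payoff

variable {α β : Type*} [MeasurableSpace α] [MeasurableSpace β] {u : α × β → ℝ}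

theorem integral_dirac_prod [MeasurableSingletonClass α] (x : α)
    (q : Measure β) [SFinite q] :
    ∫ z, u z ∂(Measure.dirac x).prod q = ∫ y, u (x, y) ∂q := by
  rw [Measure.dirac_prod, (measurableEmbedding_prodMk_left x).integral_map]

theorem integral_prod_dirac [MeasurableSingletonClass β] (p : Measure α)
    [SFinite p] (y : β) :
    ∫ z, u z ∂p.prod (Measure.dirac y) = ∫ x, u (x, y) ∂p := by
  rw [Measure.prod_dirac, (measurableEmbedding_prod_mk_right y).integral_map]

theorem integral_prod_le_of_forall_integral_dirac_prod_le [MeasurableSingletonClass α]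
    {p : Measure α} [IsProbabilityMeasure p] {q : Measure β} [SFinite q]
    (hu : Integrable u (p.prod q)) {c : ℝ} (h : ∀ x, ∫ z, u z ∂(Measure.dirac x).prod q ≤ c) :
    ∫ z, u z ∂p.prod q ≤ c := by
  simp only [integral_dirac_prod] at h
  calc ∫ z, u z ∂p.prod q = ∫ x, ∫ y, u (x, y) ∂q ∂p := integral_prod u hu
    _ ≤ ∫ _x, c ∂p := integral_mono hu.integral_prod_left (integrable_const c) h
    _ = c := by simp

theorem le_integral_prod_of_forall_le_integral_prod_dirac [MeasurableSingletonClass β]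
    {p : Measure α} [SFinite p] {q : Measure β} [IsProbabilityMeasure q]
    (hu : Integrable u (p.prod q)) {c : ℝ} (h : ∀ y, c ≤ ∫ z, u z ∂p.prod (Measure.dirac y)) :
    c ≤ ∫ z, u z ∂p.prod q := by
  simp only [integral_prod_dirac] at h
  calc c = ∫ _y, c ∂q := by simp
    _ ≤ ∫ y, ∫ x, u (x, y) ∂p ∂q := integral_mono (integrable_const c) hu.integral_prod_right h
    _ = ∫ z, u z ∂p.prod q := (integral_prod_symm u hu).symm

def IsEpsEquilibrium (u : α × β → ℝ) (ε : ℝ) (p : Measure α) (q : Measure β) : Prop :=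
  (∀ (p' : Measure α) [IsProbabilityMeasure p'],
    ∫ z, u z ∂p'.prod q - ε ≤ ∫ z, u z ∂p.prod q) ∧
  (∀ (q' : Measure β) [IsProbabilityMeasure q'],
    ∫ z, u z ∂p.prod q ≤ ∫ z, u z ∂p.prod q' + ε)

theorem isEpsEquilibrium_of_dualityGap_le [MeasurableSingletonClass α] [MeasurableSingletonClass β]
    (hu : ∀ (p : Measure α) (q : Measure β) [IsProbabilityMeasure p] [IsProbabilityMeasure q],
      Integrable u (p.prod q))
    {p : Measure α} {q : Measure β} [IsProbabilityMeasure p] [IsProbabilityMeasure q]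
    {x₀ : α} {y₀ : β}
    (hx₀ : ∀ x, ∫ z, u z ∂(Measure.dirac x).prod q ≤ ∫ z, u z ∂(Measure.dirac x₀).prod q)
    (hy₀ : ∀ y, ∫ z, u z ∂p.prod (Measure.dirac y₀) ≤ ∫ z, u z ∂p.prod (Measure.dirac y))
    {ε : ℝ} (hgap : ∫ z, u z ∂(Measure.dirac x₀).prod q - ∫ z, u z ∂p.prod (Measure.dirac y₀) ≤ ε) :
    IsEpsEquilibrium u ε p q := by
  have hmax : ∀ (p' : Measure α) [IsProbabilityMeasure p'],
      ∫ z, u z ∂p'.prod q ≤ ∫ z, u z ∂(Measure.dirac x₀).prod q :=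
    fun p' _ ↦ integral_prod_le_of_forall_integral_dirac_prod_le (hu p' q) hx₀
  have hmin : ∀ (q' : Measure β) [IsProbabilityMeasure q'],
      ∫ z, u z ∂p.prod (Measure.dirac y₀) ≤ ∫ z, u z ∂p.prod q' :=
    fun q' _ ↦ le_integral_prod_of_forall_le_integral_prod_dirac (hu p q') hy₀
  exact ⟨fun p' _ ↦ by linarith [hmax p', hmin q], fun q' _ ↦ by linarith [hmax p, hmin q']⟩

end Payoff

theorem Continuous.integrable_of_compactSpace {α : Type*} [TopologicalSpace α] [CompactSpace α]
    [MeasurableSpace α] [OpensMeasurableSpace α] {f : α → ℝ} (hf : Continuous f)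
    (μ : Measure α) [IsFiniteMeasure μ] : Integrable f μ :=
  hf.integrable_of_hasCompactSupport (isClosed_tsupport f).isCompact

theorem integral_le_integral_add_of_le_add {α : Type*} [MeasurableSpace α] {μ : Measure α}
    [IsProbabilityMeasure μ] {f g : α → ℝ} (hf : Integrable f μ) (hg : Integrable g μ) {c : ℝ}
    (h : ∀ a, f a ≤ g a + c) : ∫ a, f a ∂μ ≤ ∫ a, g a ∂μ + c :=
  calc ∫ a, f a ∂μ ≤ ∫ a, g a + c ∂μ := integral_mono hf (hg.add (integrable_const c)) h
    _ = ∫ a, g a ∂μ + c := by rw [integral_add hg (integrable_const c)]; simp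

namespace DoubleOracle

variable {α β : Type*} [MetricSpace α] [CompactSpace α] [MeasurableSpace α]
  [OpensMeasurableSpace α] [MetricSpace β] [CompactSpace β] [MeasurableSpace β]
  [OpensMeasurableSpace β] {u : α × β → ℝ}

theorem exists_dualityGap_le (hu : Continuous u) {ε : ℝ}
    (hε : 0 < ε) (ps : ℕ → Measure α) (qs : ℕ → Measure β) [∀ i, IsProbabilityMeasure (ps i)]
    [∀ i, IsProbabilityMeasure (qs i)] (Xi : ℕ → Set α) (Yi : ℕ → Set β)
    (xseq : ℕ → α) (yseq : ℕ → β)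
    (hXrec : ∀ i, Xi (i + 1) = insert (xseq i) (Xi i))
    (hYrec : ∀ i, Yi (i + 1) = insert (yseq i) (Yi i))
    (hsub₁ : ∀ i, ∀ x ∈ Xi i,
      ∫ z, u z ∂(Measure.dirac x).prod (qs i) ≤ ∫ z, u z ∂(ps i).prod (qs i))
    (hsub₂ : ∀ i, ∀ y ∈ Yi i,
      ∫ z, u z ∂(ps i).prod (qs i) ≤ ∫ z, u z ∂(ps i).prod (Measure.dirac y)) :
    ∃ j, ∫ z, u z ∂(Measure.dirac (xseq j)).prod (qs j)
      - ∫ z, u z ∂(ps j).prod (Measure.dirac (yseq j)) ≤ ε := by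
  obtain ⟨δ, hδ, hclose⟩ := Metric.uniformContinuous_iff.mp
    (CompactSpace.uniformContinuous_of_continuous hu) (ε / 2) (half_pos hε)
  have hle : ∀ {a b : α × β}, dist a b < δ → u a ≤ u b + ε / 2 := fun {a b} h ↦ by
    linarith [le_abs_self (u a - u b), Real.dist_eq (u a) (u b) ▸ hclose h]
  obtain ⟨i, j, hij, hd⟩ := exists_lt_and_dist_lt_of_compactSpace (fun k ↦ (xseq k, yseq k)) hδ
  rw [Prod.dist_eq, max_lt_iff] at hd
  have hx : ∫ y, u (xseq j, y) ∂qs j ≤ ∫ y, u (xseq i, y) ∂qs j + ε / 2 := by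
    refine integral_le_integral_add_of_le_add
      ((by fun_prop : Continuous fun y ↦ u (xseq j, y)).integrable_of_compactSpace _)
      ((by fun_prop : Continuous fun y ↦ u (xseq i, y)).integrable_of_compactSpace _) fun y ↦ hle ?_
    rw [dist_prod_same_right, dist_comm]
    exact hd.1
  have hy : ∫ x, u (x, yseq i) ∂ps j ≤ ∫ x, u (x, yseq j) ∂ps j + ε / 2 := by
    refine integral_le_integral_add_of_le_add
      ((by fun_prop : Continuous fun x ↦ u (x, yseq i)).integrable_of_compactSpace _)
      ((by fun_prop : Continuous fun x ↦ u (x, yseq j)).integrable_of_compactSpace _) fun x ↦ hle ?_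
    rw [dist_prod_same_left]
    exact hd.2
  have h₁ := hsub₁ j (xseq i) (mem_of_lt_of_forall_succ_eq_insert hXrec hij)
  have h₂ := hsub₂ j (yseq i) (mem_of_lt_of_forall_succ_eq_insert hYrec hij)
  simp only [integral_dirac_prod, integral_prod_dirac] at h₁ h₂ ⊢
  exact ⟨j, by linarith⟩

end DoubleOracle

theorem stmt_11_general {m n : ℕ}
    (X : Set (EuclideanSpace ℝ (Fin m))) (Y : Set (EuclideanSpace ℝ (Fin n)))
    (hXc : IsCompact X) (hYc : IsCompact Y)
    (u : X × Y → ℝ) (hu : Continuous u)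
    (ε : ℝ) (hε : 0 < ε)
    -- iterates of the double oracle algorithm
    (Xi : ℕ → Finset X) (Yi : ℕ → Finset Y)
    (ps : ℕ → Measure X) (qs : ℕ → Measure Y)
    (hpsprob : ∀ i, IsProbabilityMeasure (ps i)) (hqsprob : ∀ i, IsProbabilityMeasure (qs i))
    (hpssupp : ∀ i, ps i ((↑(Xi i) : Set X)ᶜ) = 0)
    (hqssupp : ∀ i, qs i ((↑(Yi i) : Set Y)ᶜ) = 0)
    (hsub₁ : ∀ i, ∀ x ∈ Xi i,
      ∫ z, u z ∂((Measure.dirac x).prod (qs i)) ≤ ∫ z, u z ∂((ps i).prod (qs i)))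
    (hsub₂ : ∀ i, ∀ y ∈ Yi i,
      ∫ z, u z ∂((ps i).prod (qs i)) ≤ ∫ z, u z ∂((ps i).prod (Measure.dirac y)))
    (xseq : ℕ → X) (yseq : ℕ → Y)
    (hx : ∀ i, ∀ x : X,
      ∫ z, u z ∂((Measure.dirac x).prod (qs i)) ≤ ∫ z, u z ∂((Measure.dirac (xseq i)).prod (qs i)))
    (hy : ∀ i, ∀ y : Y,
      ∫ z, u z ∂((ps i).prod (Measure.dirac (yseq i))) ≤ ∫ z, u z ∂((ps i).prod (Measure.dirac y)))
    (hXrec : ∀ i, (↑(Xi (i + 1)) : Set X) = insert (xseq i) ↑(Xi i))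
    (hYrec : ∀ i, (↑(Yi (i + 1)) : Set Y) = insert (yseq i) ↑(Yi i)) :
    ∃ i,
      -- the terminating condition is reached in finitely many steps
      (∫ z, u z ∂((Measure.dirac (xseq i)).prod (qs i)))
        - (∫ z, u z ∂((ps i).prod (Measure.dirac (yseq i)))) ≤ ε ∧
      -- (ps i, qs i) is finitely supported
      (∃ s : Finset X, ps i ((↑s : Set X)ᶜ) = 0) ∧
      (∃ t : Finset Y, qs i ((↑t : Set Y)ᶜ) = 0) ∧
      -- and is an ε-equilibrium of G
      (∀ (p : Measure X) [IsProbabilityMeasure p],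
        ∫ z, u z ∂(p.prod (qs i)) - ε ≤ ∫ z, u z ∂((ps i).prod (qs i))) ∧
      (∀ (q : Measure Y) [IsProbabilityMeasure q],
        ∫ z, u z ∂((ps i).prod (qs i)) ≤ ∫ z, u z ∂((ps i).prod q) + ε) := by
  have := isCompact_iff_compactSpace.mp hXc
  have := isCompact_iff_compactSpace.mp hYc
  obtain ⟨i, hgap⟩ := DoubleOracle.exists_dualityGap_le hu hε ps qs (fun i ↦ Xi i) (fun i ↦ Yi i)
    xseq yseq hXrec hYrec hsub₁ hsub₂
  have hequil : IsEpsEquilibrium u ε (ps i) (qs i) :=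
    isEpsEquilibrium_of_dualityGap_le (fun _ _ _ _ ↦ hu.integrable_of_compactSpace _)
      (hx i) (hy i) hgap
  exact ⟨i, hgap, ⟨Xi i, hpssupp i⟩, ⟨Yi i, hqssupp i⟩, hequil.1, hequil.2⟩

/-- for ε > 0, along any run of the double oracle algorithm there is a step
with duality gap ≤ ε whose subgame equilibrium is a finitely supported ε-equilibrium of G. -/
theorem stmt_11 {m n : ℕ}
    (X : Set (EuclideanSpace ℝ (Fin m))) (Y : Set (EuclideanSpace ℝ (Fin n)))
    (hXne : X.Nonempty) (hXc : IsCompact X) (hYne : Y.Nonempty) (hYc : IsCompact Y)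
    (u : X × Y → ℝ) (hu : Continuous u)
    (ε : ℝ) (hε : 0 < ε)
    -- iterates of the double oracle algorithm
    (Xi : ℕ → Finset X) (Yi : ℕ → Finset Y)
    (hXi : ∀ i, (Xi i).Nonempty) (hYi : ∀ i, (Yi i).Nonempty)
    (ps : ℕ → Measure X) (qs : ℕ → Measure Y)
    (hpsprob : ∀ i, IsProbabilityMeasure (ps i)) (hqsprob : ∀ i, IsProbabilityMeasure (qs i))
    (hpssupp : ∀ i, ps i ((↑(Xi i) : Set X)ᶜ) = 0)
    (hqssupp : ∀ i, qs i ((↑(Yi i) : Set Y)ᶜ) = 0)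
    (hsub₁ : ∀ i, ∀ x ∈ Xi i,
      ∫ z, u z ∂((Measure.dirac x).prod (qs i)) ≤ ∫ z, u z ∂((ps i).prod (qs i)))
    (hsub₂ : ∀ i, ∀ y ∈ Yi i,
      ∫ z, u z ∂((ps i).prod (qs i)) ≤ ∫ z, u z ∂((ps i).prod (Measure.dirac y)))
    (xseq : ℕ → X) (yseq : ℕ → Y)
    (hx : ∀ i, ∀ x : X,
      ∫ z, u z ∂((Measure.dirac x).prod (qs i)) ≤ ∫ z, u z ∂((Measure.dirac (xseq i)).prod (qs i)))
    (hy : ∀ i, ∀ y : Y,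
      ∫ z, u z ∂((ps i).prod (Measure.dirac (yseq i))) ≤ ∫ z, u z ∂((ps i).prod (Measure.dirac y)))
    (hXrec : ∀ i, (↑(Xi (i + 1)) : Set X) = insert (xseq i) ↑(Xi i))
    (hYrec : ∀ i, (↑(Yi (i + 1)) : Set Y) = insert (yseq i) ↑(Yi i)) :
    ∃ i,
      -- the terminating condition is reached in finitely many steps
      (∫ z, u z ∂((Measure.dirac (xseq i)).prod (qs i)))
        - (∫ z, u z ∂((ps i).prod (Measure.dirac (yseq i)))) ≤ ε ∧
      -- (ps i, qs i) is finitely supported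
      (∃ s : Finset X, ps i ((↑s : Set X)ᶜ) = 0) ∧
      (∃ t : Finset Y, qs i ((↑t : Set Y)ᶜ) = 0) ∧
      -- and is an ε-equilibrium of G
      (∀ (p : Measure X) [IsProbabilityMeasure p],
        ∫ z, u z ∂(p.prod (qs i)) - ε ≤ ∫ z, u z ∂((ps i).prod (qs i))) ∧
      (∀ (q : Measure Y) [IsProbabilityMeasure q],
        ∫ z, u z ∂((ps i).prod (qs i)) ≤ ∫ z, u z ∂((ps i).prod q) + ε) :=
  stmt_11_general X Y hXc hYc u hu ε hε Xi Yi ps qs hpsprob hqsprob hpssupp hqssupp hsub₁ hsub₂ xseq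
    yseq hx hy hXrec hYrec
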